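/- Let 0 < P₁ < 1. The binary Jaccard index Jac(e) = (P₁ − e₁)/(P₁ + e₂), viewed as a function of e = (e₁, e₂) ∈ ℝ², is pseudo-linear on the open convex half-plane {e ∈ ℝ² : P₁ + e₂ > 0}. -/

import Mathlib

open RealInnerProductSpace

/-- A differentiable function `F` is pseudo-convex on `D` if for all `e, e' ∈ D`,
`F e > F e'` implies `⟪∇F e, e' - e⟫ < 0`. -/
def PseudoConvexOn {E : Type*} [NormedAddCommGroup E] [InnerProductSpace ℝ E]
    [CompleteSpace E] (D : Set E) (F : E → ℝ) : Prop :=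
  ∀ e ∈ D, ∀ e' ∈ D, F e > F e' → ⟪gradient F e, e' - e⟫ < 0

/-- `F` is pseudo-linear on `D` if both `F` and `-F` are pseudo-convex on `D`. -/
def PseudoLinearOn {E : Type*} [NormedAddCommGroup E] [InnerProductSpace ℝ E]
    [CompleteSpace E] (D : Set E) (F : E → ℝ) : Prop :=
  PseudoConvexOn D F ∧ PseudoConvexOn D (fun e => -F e)

/-!
A linear-fractional function `F = a / b`, with `a`, `b` affine and `b > 0`, satisfies the exact
identity `⟪∇F e, e' - e⟫ = (b e' / b e) * (F e' - F e)`. The factor `b e' / b e` is positive,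
so the directional derivative towards `e'` has the sign of `F e' - F e`, which is
pseudo-linearity of `F`.
-/

theorem fderiv_div_apply {𝕜 E : Type*} [NontriviallyNormedField 𝕜] [NormedAddCommGroup E]
    [NormedSpace 𝕜 E] {a b : E → 𝕜} {e : E} (ha : DifferentiableAt 𝕜 a e)
    (hb : DifferentiableAt 𝕜 b e) (hbe : b e ≠ 0) (v : E) :
    fderiv 𝕜 (fun x => a x / b x) e v =
      (fderiv 𝕜 a e v * b e - a e * fderiv 𝕜 b e v) / b e ^ 2 := by
  have hinv : HasFDerivAt (fun x => (b x)⁻¹) ((-(b e ^ 2)⁻¹) • fderiv 𝕜 b e) e :=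
    (hasDerivAt_inv hbe).comp_hasFDerivAt e hb.hasFDerivAt
  simp only [div_eq_mul_inv]
  rw [(ha.hasFDerivAt.fun_mul hinv).fderiv]
  simp only [add_apply, smul_apply, smul_eq_mul]
  field_simp
  ring

section PseudoLinear

variable {E : Type*} [NormedAddCommGroup E] [InnerProductSpace ℝ E] [CompleteSpace E]

theorem inner_gradient_neg (F : E → ℝ) (e v : E) :
    ⟪gradient (fun x => -F x) e, v⟫ = -⟪gradient F e, v⟫ := by
  simp only [inner_gradient_left, fderiv_fun_neg, neg_apply]

theorem pseudoLinearOn_of_inner_gradient_eq_pos_mul {D : Set E} {F : E → ℝ}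
    (h : ∀ e ∈ D, ∀ e' ∈ D, ∃ c > 0, ⟪gradient F e, e' - e⟫ = c * (F e' - F e)) :
    PseudoLinearOn D F := by
  constructor
  · intro e he e' he' hlt
    obtain ⟨c, hc, hF⟩ := h e he e' he'
    rw [hF]
    exact mul_neg_of_pos_of_neg hc (sub_neg.mpr hlt)
  · intro e he e' he' hlt
    obtain ⟨c, hc, hF⟩ := h e he e' he'
    rw [inner_gradient_neg, hF, neg_lt_zero]
    exact mul_pos hc (sub_pos.mpr (neg_lt_neg_iff.mp hlt))

theorem inner_gradient_div_affine (ℓa ℓb : E →L[ℝ] ℝ) (α β : ℝ) {e e' : E}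
    (he : ℓb e + β ≠ 0) (he' : ℓb e' + β ≠ 0) :
    ⟪gradient (fun x => (ℓa x + α) / (ℓb x + β)) e, e' - e⟫ =
      (ℓb e' + β) / (ℓb e + β) *
        ((ℓa e' + α) / (ℓb e' + β) - (ℓa e + α) / (ℓb e + β)) := by
  have hda : DifferentiableAt ℝ (fun x => ℓa x + α) e := by fun_prop
  have hdb : DifferentiableAt ℝ (fun x => ℓb x + β) e := by fun_prop
  rw [inner_gradient_left, fderiv_div_apply hda hdb he, fderiv_add_const, fderiv_add_const,
    ContinuousLinearMap.fderiv, ContinuousLinearMap.fderiv, map_sub, map_sub]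
  field_simp
  ring

theorem pseudoLinearOn_div_affine (ℓa ℓb : E →L[ℝ] ℝ) (α β : ℝ) :
    PseudoLinearOn {x | 0 < ℓb x + β} (fun x => (ℓa x + α) / (ℓb x + β)) :=
  pseudoLinearOn_of_inner_gradient_eq_pos_mul fun _ he _ he' =>
    ⟨_, div_pos he' he, inner_gradient_div_affine ℓa ℓb α β he.ne' he'.ne'⟩

end PseudoLinear

theorem binary_jaccard_pseudoLinear_general (P₁ : ℝ) :
    PseudoLinearOn
      {e : EuclideanSpace ℝ (Fin 2) | P₁ + e 1 > 0}
      (fun e => (P₁ - e 0) / (P₁ + e 1)) := by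
  convert pseudoLinearOn_div_affine
      (-EuclideanSpace.proj (0 : Fin 2)) (EuclideanSpace.proj 1) P₁ P₁ using 2 <;>
    simp only [neg_apply, PiLp.proj_apply] <;> ring_nf

/-- The binary Jaccard index `Jac(e) = (P₁ − e₁)/(P₁ + e₂)` is pseudo-linear on the
open half-plane where its denominator is positive. -/
theorem binary_jaccard_pseudoLinear (P₁ : ℝ) (hP₁ : 0 < P₁) (hP₁' : P₁ < 1) :
    PseudoLinearOn
      {e : EuclideanSpace ℝ (Fin 2) | P₁ + e 1 > 0}
      (fun e => (P₁ - e 0) / (P₁ + e 1)) :=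
  binary_jaccard_pseudoLinear_general P₁
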